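/- Let h and c be complex numbers with Re(conj(h) · c) > 0 and let n be a positive real number. Define f : [0, π/2] → ℝ by f(θ) = |h + ((cos θ)^(n/2)) · c|. Then θ = π/2 is not a maximizer of f on [0, π/2]: there exists θ₀ ∈ [0, π/2) with f(θ₀) > f(π/2) = |h|. Consequently, the incidence direction that maximizes the received-signal magnitude at a fixed departure direction is not the grazing direction θ = π/2, which shows that an incident direction of θ → 90° cannot be recovered as the optimal departure direction in the reversed link, i.e., beam reciprocity fails for the IOS. -/

import Mathlib

open Real Complex

/-! At grazing incidence the IOS-assisted term `(cos θ)^(n/2) · c` vanishes, leaving `|h|`, while at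
normal incidence the two links add to `h + c`. Constructive interference is exactly a positive
cross term in `‖h + c‖² = ‖h‖² + 2 Re(conj h · c) + ‖c‖²`, so `|h + c| > |h|`. -/

theorem norm_lt_norm_add_of_re_inner_pos {𝕜 E : Type*} [RCLike 𝕜] [NormedAddCommGroup E]
    [InnerProductSpace 𝕜 E] {x y : E} (hxy : 0 < RCLike.re (inner 𝕜 x y)) :
    ‖x‖ < ‖x + y‖ := by
  have hsq : ‖x‖ ^ 2 < ‖x + y‖ ^ 2 := by
    rw [@norm_add_sq 𝕜]
    linarith [sq_nonneg ‖y‖]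
  exact lt_of_pow_lt_pow_left₀ 2 (norm_nonneg _) hsq

theorem Complex.norm_lt_norm_add_of_re_conj_mul_pos {h c : ℂ}
    (hconstr : 0 < ((starRingEnd ℂ) h * c).re) : ‖h‖ < ‖h + c‖ :=
  norm_lt_norm_add_of_re_inner_pos (𝕜 := ℂ) (by rwa [RCLike.inner_apply'])

/-- Beam non-reciprocity of the IOS: for `f(θ) = |h + (cos θ)^(n/2) · c|` with
constructive interference `Re(conj(h) · c) > 0` and `n > 0`, the grazing direction
`θ = π/2` is not a maximizer of `f` on `[0, π/2]`: there exists `θ₀ ∈ [0, π/2)` with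
`f(θ₀) > f(π/2)`, and moreover `f(π/2) = |h|`. -/
theorem grazing_not_maximizer
    (h c : ℂ) (hconstr : 0 < ((starRingEnd ℂ) h * c).re) (n : ℝ) (hn : 0 < n)
    (f : ℝ → ℝ)
    (hf : ∀ θ : ℝ, f θ = ‖h + ((Real.cos θ ^ (n / 2) : ℝ) : ℂ) * c‖) :
    (∃ θ₀ ∈ Set.Ico 0 (Real.pi / 2), f θ₀ > f (Real.pi / 2)) ∧
      f (Real.pi / 2) = ‖h‖ := by
  have hgrazing : f (Real.pi / 2) = ‖h‖ := by
    simp [hf, Real.zero_rpow (by positivity : n / 2 ≠ 0)]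
  have hnormal : f 0 = ‖h + c‖ := by simp [hf]
  refine ⟨⟨0, ⟨le_rfl, by positivity⟩, ?_⟩, hgrazing⟩
  rw [hgrazing, hnormal]
  exact Complex.norm_lt_norm_add_of_re_conj_mul_pos hconstr
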